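/- For any finite multiset M of natural numbers, the polynomial C̃_M(q,t) = Σ_{P ∈ L_M} q^{area(P)} t^{depth(P)} is symmetric in q and t, i.e., C̃_M(q,t) = C̃_M(t,q); equivalently, the statistics area and depth are jointly symmetrically distributed over Łukasiewicz paths with profile multiset M. -/
import Mathlib


/-! ## Plane trees -/

/-- A plane tree: a root together with an ordered (left-to-right) list of subtrees.
A node is a *leaf* if it has no children, and *internal* otherwise. -/
inductive PTree : Type where
  | node : List PTree → PTree


namespace Luka

/-! ## Łukasiewicz paths

A path is encoded by its list of step increments: the step `(1,k)` (an up-step `U_k` of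
degree `k`) is encoded by `k : ℤ` with `k ≥ 0`, and the down step `D = (1,-1)` by `-1`. -/

/-- `P` is a Łukasiewicz path: it is nonempty, uses steps `(1,k)` with `k ≥ -1`,
stays (weakly) above the `x`-axis before its last step, and ends at height `-1`
(so that it goes strictly below the axis only at the last step, which is forced
to be the down-step `D`). -/
def IsLukas (P : List ℤ) : Prop :=
  P ≠ [] ∧ (∀ s ∈ P, -1 ≤ s) ∧ (∀ n, n < P.length → 0 ≤ (P.take n).sum) ∧ P.sum = -1

/-- The degrees of the up-steps of `P`, from left to right (the *profile* of `P`). -/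
def upDegs (P : List ℤ) : List ℕ := (P.filter (fun s => 0 ≤ s)).map Int.toNat

/-- The profile multiset `𝔐(P)`: the multiset of degrees of the up-steps of `P`. -/
def profileM (P : List ℤ) : Multiset ℕ := (upDegs P : Multiset ℕ)

/-- The degree of the first up-step of `P`, if any. -/
def firstUp? (P : List ℤ) : Option ℕ := (upDegs P).head?

/-- The degree of the last up-step of `P`, if any. -/
def lastUp? (P : List ℤ) : Option ℕ := (upDegs P).getLast?

/-- Auxiliary: starting from height `h`, record the starting height of every up-step. -/
def areaVecAux : ℤ → List ℤ → List ℤ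
  | _, [] => []
  | h, s :: rest => (if 0 ≤ s then [h] else []) ++ areaVecAux (h + s) rest

/-- The area vector `Area(P)`: the `i`-th entry is the `y`-coordinate of the starting
point of the `i`-th up-step of `P`. -/
def areaVec (P : List ℤ) : List ℤ := areaVecAux 0 P

/-- `area(P)`: the sum of the entries of the area vector (entries of a Łukasiewicz
path are nonnegative, so taking `Int.toNat` entrywise is harmless). -/
def area (P : List ℤ) : ℕ := ((areaVec P).map Int.toNat).sum

/-- Auxiliary computation of the depth values: `cur` is the depth value of the previous
step (`0` initially), and `stack` holds the pending depth values of the future matching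
down-steps (top of the stack = value for the next matching down-step to come).
Reading an up-step `U_k` whose value is `cur` (inherited from the previous step) pushes
the values `cur+1, …, cur+k` for its `k` matching down-steps (its first matching
down-step, which crosses its topmost interior level, gets `cur+1`, etc.); reading a
down-step pops its value.  The list returned records the value `d_i` of each up-step,
from left to right. -/
def depthVecAux : ℕ → List ℕ → List ℤ → List ℕ
  | _, _, [] => []
  | cur, stack, s :: rest =>
    if 0 ≤ s then
      cur :: depthVecAux cur ((List.range s.toNat).map (fun i => cur + i + 1) ++ stack) rest
    else
      match stack with
      | [] => depthVecAux cur [] rest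
      | v :: st => depthVecAux v st rest

/-- The depth vector `Depth(P)`: the values `d_i` at the up-steps of `P`, left to right. -/
def depthVec (P : List ℤ) : List ℕ := depthVecAux 0 [] P

/-- `depth(P)`: the sum of the entries of the depth vector. -/
def depth (P : List ℤ) : ℕ := (depthVec P).sum

/-- `P ∈ 𝓛_M`. -/
def MemL (M : Multiset ℕ) (P : List ℤ) : Prop := IsLukas P ∧ profileM P = M

/-- `P ∈ 𝓛_{a,M}`: first up-step of degree `a`, profile multiset `M ⊎ {a}`. -/
def MemLa (a : ℕ) (M : Multiset ℕ) (P : List ℤ) : Prop :=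
  IsLukas P ∧ firstUp? P = some a ∧ profileM P = a ::ₘ M

/-- `P ∈ 𝓛_{M,b}`: last up-step of degree `b`, profile multiset `M ⊎ {b}`. -/
def MemLb (M : Multiset ℕ) (b : ℕ) (P : List ℤ) : Prop :=
  IsLukas P ∧ lastUp? P = some b ∧ profileM P = b ::ₘ M

/-- `P ∈ 𝓛_{a,M,b}`: first up-step of degree `a`, last up-step of degree `b`,
profile multiset `M ⊎ {a, b}`. -/
def MemLab (a : ℕ) (M : Multiset ℕ) (b : ℕ) (P : List ℤ) : Prop :=
  IsLukas P ∧ firstUp? P = some a ∧ lastUp? P = some b ∧ profileM P = a ::ₘ b ::ₘ M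

/-! ## Plane-tree statistics -/

/-- The (ordered) children of the root of a plane tree. -/
def children : PTree → List PTree
  | .node ts => ts

/-- The degree of (the root of) a plane tree: its number of children. -/
def numChildren (t : PTree) : ℕ := (children t).length

mutual
/-- Number of internal nodes of a plane tree. -/
def internCount : PTree → ℕ
  | .node [] => 0
  | .node (t :: ts) => 1 + internCountL (t :: ts)
def internCountL : List PTree → ℕ
  | [] => 0
  | t :: ts => internCount t + internCountL ts
end

mutual
/-- `lthornT T` = the sum of `lthorn(u)` over all internal nodes `u` of `T`, where
`lthorn(u)` is the number of descending edges of strict ancestors `v` of `u` lying to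
the left of the path from `v` to `u`.  (Every internal node of the subtree rooted at
the `i`-th child (0-indexed) of a node gains `i` left thorns from that node.) -/
def lthornT : PTree → ℕ
  | .node ts => lthornL 0 ts
def lthornL : ℕ → List PTree → ℕ
  | _, [] => 0
  | i, t :: ts => lthornT t + i * internCount t + lthornL (i + 1) ts
end

mutual
/-- `rthornT T` = the sum of `rthorn(u)` over all internal nodes `u` of `T`, where
`rthorn(u)` is the number of descending edges of strict ancestors `v` of `u` lying to
the right of the path from `v` to `u`. -/
def rthornT : PTree → ℕ
  | .node ts => rthornL ts
def rthornL : List PTree → ℕ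
  | [] => 0
  | t :: ts => rthornT t + ts.length * internCount t + rthornL ts
end

mutual
/-- The list of the values `lthorn(u)` for the internal nodes `u` of `T`, in
contour-walk (preorder) order. -/
def lthornList : PTree → List ℕ
  | .node [] => []
  | .node (t :: ts) => 0 :: lthornLL 0 (t :: ts)
def lthornLL : ℕ → List PTree → List ℕ
  | _, [] => []
  | i, t :: ts => (lthornList t).map (· + i) ++ lthornLL (i + 1) ts
end

mutual
/-- The list of the values `rthorn(u)` for the internal nodes `u` of `T`, in
contour-walk (preorder) order. -/
def rthornList : PTree → List ℕ
  | .node [] => []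
  | .node (t :: ts) => 0 :: rthornLL (t :: ts)
def rthornLL : List PTree → List ℕ
  | [] => []
  | t :: ts => (rthornList t).map (· + ts.length) ++ rthornLL ts
end

/-! ## The bijections `λ` and `τ` -/

mutual
/-- `λ`: record each node of the tree at its first visit in the left-to-right contour
walk: `U_k` (i.e. `k`) for an internal node with `k+1` children, `D` (i.e. `-1`)
for a leaf. -/
def lambdaT : PTree → List ℤ
  | .node ts => ((ts.length : ℤ) - 1) :: lambdaL ts
def lambdaL : List PTree → List ℤ
  | [] => []
  | t :: ts => lambdaT t ++ lambdaL ts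
end

/-- Auxiliary for `τ`: reading the path from right to left, maintain the stack of the
already-built subtrees (in left-to-right order); a down-step `D` creates a leaf and an
up-step `U_k` grabs the `k+1` topmost subtrees as its children.  This builds the same
tree as the left-to-right "leftmost bud" construction. -/
def tauStack (P : List ℤ) : List PTree :=
  P.foldr (fun s st =>
    if s < 0 then PTree.node [] :: st
    else PTree.node (st.take (s.toNat + 1)) :: st.drop (s.toNat + 1)) []

/-- `τ`: the plane tree associated with a Łukasiewicz path. -/
def tau (P : List ℤ) : PTree := (tauStack P).headD (.node [])

mutual
/-- The mirror of a plane tree: reverse the left-to-right order of the children of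
every internal node. -/
def mir : PTree → PTree
  | .node ts => .node (mirL ts).reverse
def mirL : List PTree → List PTree
  | [] => []
  | t :: ts => mir t :: mirL ts
end

mutual
/-- The subtrees rooted at the internal nodes of `T`, in contour-walk (preorder)
order. -/
def internalSubtrees : PTree → List PTree
  | .node [] => []
  | .node (t :: ts) => .node (t :: ts) :: internalSubtreesL (t :: ts)
def internalSubtreesL : List PTree → List PTree
  | [] => []
  | t :: ts => internalSubtrees t ++ internalSubtreesL ts
end

/-- The multiset of degrees of the non-root internal nodes of `T`. -/
def nonRootInternalDegs (T : PTree) : Multiset ℕ :=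
  (((internalSubtreesL (children T)).map numChildren : List ℕ) : Multiset ℕ)

/-! ## Lodestars and the lodestar swap -/

/-- A node is a lodestar-type node if it is internal and all its children are leaves. -/
def isLodestarNode (t : PTree) : Bool :=
  !(children t).isEmpty && (children t).all (fun c => (children c).isEmpty)

mutual
/-- The subtree rooted at the *left lodestar* of `T`: the first internal node, in
contour-walk (preorder) order, all of whose children are leaves (if it exists). -/
def leftLode? : PTree → Option PTree
  | .node ts =>
    if isLodestarNode (.node ts) then some (.node ts) else leftLodeL? ts
def leftLodeL? : List PTree → Option PTree
  | [] => none
  | t :: ts =>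
    match leftLode? t with
    | some r => some r
    | none => leftLodeL? ts
end

mutual
/-- The subtree rooted at the *right lodestar* of `T`: the last internal node, in
contour-walk (preorder) order, all of whose children are leaves (if it exists). -/
def rightLode? : PTree → Option PTree
  | .node ts =>
    match rightLodeL? ts with
    | some r => some r
    | none => if isLodestarNode (.node ts) then some (.node ts) else none
def rightLodeL? : List PTree → Option PTree
  | [] => none
  | t :: ts =>
    match rightLodeL? ts with
    | some r => some r
    | none => rightLode? t
end

mutual
/-- Replace the left lodestar of `T` (first preorder all-leaf-children internal node)
by the tree `r`; `none` if `T` has no internal node. -/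
def replF : PTree → PTree → Option PTree
  | r, .node ts =>
    if isLodestarNode (.node ts) then some r
    else (replFL r ts).map PTree.node
def replFL : PTree → List PTree → Option (List PTree)
  | _, [] => none
  | r, t :: ts =>
    match replF r t with
    | some t' => some (t' :: ts)
    | none => (replFL r ts).map (t :: ·)
end

mutual
/-- Replace the right lodestar of `T` (last preorder all-leaf-children internal node)
by the tree `r`; `none` if `T` has no internal node. -/
def replL : PTree → PTree → Option PTree
  | r, .node ts =>
    match replLL r ts with
    | some ts' => some (.node ts')
    | none => if isLodestarNode (.node ts) then some r else none
def replLL : PTree → List PTree → Option (List PTree)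
  | _, [] => none
  | r, t :: ts =>
    match replLL r ts with
    | some ts' => some (t :: ts')
    | none => (replL r t).map (· :: ts)
end

/-- The lodestar swap: exchange the subtrees rooted at the left lodestar and the
right lodestar of `T` (each a node together with its pendant leaves). -/
def lodeSwap (T : PTree) : PTree :=
  match leftLode? T, rightLode? T with
  | some L, some R => ((replF R T).bind (replL L)).getD T
  | _, _ => T


/-! ### Auxiliary lemmas for the proof -/

theorem mirL_eq_map (l : List PTree) : mirL l = l.map mir := by
  induction l with
  | nil => rfl
  | cons t ts ih => simp [mirL, ih]

mutual
theorem mir_mir : (t : PTree) → mir (mir t) = t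
  | .node ts => by
    rw [mir, mir, mirL_eq_map, mirL_eq_map, List.map_reverse, List.reverse_reverse,
      List.map_map]
    show PTree.node (ts.map (fun t => mir (mir t))) = _
    rw [mirAll ts]
theorem mirAll : (l : List PTree) → l.map (fun t => mir (mir t)) = l
  | [] => rfl
  | t :: ts => by rw [List.map_cons, mir_mir t, mirAll ts]
end

theorem lambdaL_append (a b : List PTree) : lambdaL (a ++ b) = lambdaL a ++ lambdaL b := by
  induction a with
  | nil => rfl
  | cons t ts ih => simp [lambdaL, ih]

mutual
theorem sum_lambdaT : (t : PTree) → (lambdaT t).sum = -1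
  | .node ts => by
    rw [lambdaT, List.sum_cons, sum_lambdaL ts]; ring
theorem sum_lambdaL : (l : List PTree) → (lambdaL l).sum = -(l.length : ℤ)
  | [] => rfl
  | t :: ts => by
    rw [lambdaL, List.sum_append, sum_lambdaT t, sum_lambdaL ts]
    simp only [List.length_cons]
    push_cast
    ring
end

mutual
theorem steps_lambdaT : (t : PTree) → ∀ s ∈ lambdaT t, -1 ≤ s
  | .node ts => by
    intro s hs
    rw [lambdaT, List.mem_cons] at hs
    rcases hs with h | h
    · subst h; have : (0:ℤ) ≤ ts.length := Int.ofNat_nonneg _; omega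
    · exact steps_lambdaL ts s h
theorem steps_lambdaL : (l : List PTree) → ∀ s ∈ lambdaL l, -1 ≤ s
  | [] => by intro s hs; simp [lambdaL] at hs
  | t :: ts => by
    intro s hs
    rw [lambdaL, List.mem_append] at hs
    rcases hs with h | h
    · exact steps_lambdaT t s h
    · exact steps_lambdaL ts s h
end

mutual
theorem pref_lambdaT : (t : PTree) → ∀ n, n < (lambdaT t).length → 0 ≤ ((lambdaT t).take n).sum
  | .node ts => by
    intro n hn
    match n with
    | 0 => simp
    | m + 1 =>
      rw [lambdaT] at hn ⊢
      rw [List.length_cons] at hn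
      have hm : m < (lambdaL ts).length := by omega
      rw [List.take_succ_cons, List.sum_cons]
      have := pref_lambdaL ts m hm
      omega
theorem pref_lambdaL : (l : List PTree) → ∀ m, m < (lambdaL l).length →
    1 - (l.length : ℤ) ≤ ((lambdaL l).take m).sum
  | [] => by intro m hm; simp [lambdaL] at hm
  | t :: ts => by
    intro m hm
    rw [lambdaL] at hm ⊢
    rw [List.length_append] at hm
    rw [List.take_append, List.sum_append]
    rcases Nat.lt_or_ge m (lambdaT t).length with h | h
    · have h0 := pref_lambdaT t m h
      have : m - (lambdaT t).length = 0 := by omega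
      rw [this]
      simp only [List.take_zero, List.sum_nil, List.length_cons]
      have : (0:ℤ) ≤ ts.length := Int.ofNat_nonneg _
      push_cast; omega
    · rw [List.take_of_length_le h, sum_lambdaT t]
      have hm2 : m - (lambdaT t).length < (lambdaL ts).length := by omega
      have := pref_lambdaL ts _ hm2
      simp only [List.length_cons]
      push_cast; omega
end

theorem isLukas_lambdaT (t : PTree) : IsLukas (lambdaT t) := by
  refine ⟨?_, steps_lambdaT t, pref_lambdaT t, sum_lambdaT t⟩
  cases t with | node ts => simp [lambdaT]

theorem areaVecAux_append (P Q : List ℤ) : ∀ h : ℤ,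
    areaVecAux h (P ++ Q) = areaVecAux h P ++ areaVecAux (h + P.sum) Q := by
  induction P with
  | nil => intro h; simp [areaVecAux]
  | cons s rest ih =>
    intro h
    rw [List.cons_append, areaVecAux, areaVecAux, ih (h + s), List.sum_cons,
      List.append_assoc, add_assoc]

mutual
theorem zarea_lambdaT : (t : PTree) → ∀ h : ℤ,
    (areaVecAux h (lambdaT t)).sum = rthornT t + h * internCount t
  | .node [] => by
    intro h
    show (areaVecAux h [(0:ℤ) - 1]).sum = _
    norm_num [areaVecAux, rthornT, rthornL, internCount]
  | .node (t :: ts) => by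
    intro h
    have hlen : ((t :: ts).length : ℤ) - 1 = (ts.length : ℤ) := by
      push_cast [List.length_cons]; ring
    rw [lambdaT, areaVecAux, hlen, if_pos (Int.ofNat_nonneg ts.length), List.sum_append,
      zarea_lambdaL (t :: ts) _, rthornT,
      show internCount (.node (t :: ts)) = 1 + internCountL (t :: ts) from rfl]
    simp only [List.length_cons, List.sum_cons, List.sum_nil]
    push_cast
    ring
theorem zarea_lambdaL : (l : List PTree) → ∀ h : ℤ,
    (areaVecAux h (lambdaL l)).sum = rthornL l + (h + 1 - l.length) * internCountL l
  | [] => by intro h; simp [lambdaL, areaVecAux, rthornL, internCountL]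
  | t :: ts => by
    intro h
    rw [lambdaL, areaVecAux_append, List.sum_append, zarea_lambdaT t h, sum_lambdaT t,
      zarea_lambdaL ts (h + -1), rthornL, internCountL]
    simp only [List.length_cons]
    push_cast
    ring
end

theorem areaVecAux_nonneg : ∀ (P : List ℤ) (h : ℤ),
    (∀ n, n < P.length → 0 ≤ h + (P.take n).sum) → ∀ x ∈ areaVecAux h P, 0 ≤ x := by
  intro P
  induction P with
  | nil => intro h _ x hx; simp [areaVecAux] at hx
  | cons s rest ih =>
    intro h hpre x hx
    rw [areaVecAux, List.mem_append] at hx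
    have h0 : 0 ≤ h := by simpa using hpre 0 (by simp)
    rcases hx with hx | hx
    · rcases (by split at hx <;> simp_all : x = h) with rfl
      exact h0
    · refine ih (h + s) ?_ x hx
      intro n hn
      have := hpre (n + 1) (by simpa using Nat.succ_lt_succ hn)
      rw [List.take_succ_cons, List.sum_cons] at this
      omega

theorem sum_toNat_eq (l : List ℤ) (hl : ∀ x ∈ l, 0 ≤ x) :
    ((l.map Int.toNat).sum : ℤ) = l.sum := by
  induction l with
  | nil => simp
  | cons a l ih =>
    simp only [List.map_cons, List.sum_cons, Nat.cast_add,
      ih (fun x hx => hl x (List.mem_cons_of_mem _ hx)),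
      Int.toNat_of_nonneg (hl a (by simp))]

theorem area_lambdaT (t : PTree) : area (lambdaT t) = rthornT t := by
  have hnn : ∀ x ∈ areaVecAux 0 (lambdaT t), 0 ≤ x := by
    refine areaVecAux_nonneg _ 0 ?_
    intro n hn
    simpa using (isLukas_lambdaT t).2.2.1 n hn
  have : ((area (lambdaT t) : ℤ)) = ((rthornT t : ℤ)) := by
    rw [area, areaVec, sum_toNat_eq _ hnn, zarea_lambdaT t 0]
    ring
  exact_mod_cast this

mutual
def dvT : PTree → ℕ → List ℕ
  | .node [], _ => []
  | .node (t :: ts), c => c :: dvF (t :: ts) c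
def dvF : List PTree → ℕ → List ℕ
  | [], _ => []
  | t :: ts, c => dvT t c ++ dvF ts (c + 1)
end

theorem lthornL_shift (l : List PTree) : ∀ a b : ℕ,
    lthornL (a + b) l = lthornL a l + b * internCountL l := by
  induction l with
  | nil => intro a b; simp [lthornL, internCountL]
  | cons t ts ih =>
    intro a b
    rw [lthornL, lthornL, show a + b + 1 = (a + 1) + b from by ring, ih (a + 1) b,
      internCountL]
    ring

mutual
theorem sum_dvT : (t : PTree) → ∀ c : ℕ, (dvT t c).sum = lthornT t + c * internCount t
  | .node [] => by intro c; simp [dvT, lthornT, lthornL, internCount]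
  | .node (t :: ts) => by
    intro c
    rw [dvT, List.sum_cons, sum_dvF (t :: ts) c, lthornT,
      show internCount (.node (t :: ts)) = 1 + internCountL (t :: ts) from rfl,
      show c = 0 + c from by ring, lthornL_shift]
    ring
theorem sum_dvF : (l : List PTree) → ∀ c : ℕ, (dvF l c).sum = lthornL c l
  | [] => by intro c; simp [dvF, lthornL]
  | t :: ts => by
    intro c
    rw [dvF, List.sum_append, sum_dvT t c, sum_dvF ts (c + 1), lthornL]
end

theorem depthVecAux_up (cur : ℕ) (stack : List ℕ) (s : ℤ) (hs : 0 ≤ s) (rest : List ℤ) :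
    depthVecAux cur stack (s :: rest)
      = cur :: depthVecAux cur ((List.range s.toNat).map (fun i => cur + i + 1) ++ stack) rest := by
  rw [depthVecAux.eq_def]
  simp only [if_pos hs]

theorem depthVecAux_down_cons (cur v : ℕ) (st : List ℕ) (s : ℤ) (hs : ¬ 0 ≤ s) (rest : List ℤ) :
    depthVecAux cur (v :: st) (s :: rest) = depthVecAux v st rest := by
  rw [depthVecAux.eq_def]
  simp only [if_neg hs]

theorem depthVecAux_down_nil (cur : ℕ) (s : ℤ) (hs : ¬ 0 ≤ s) (rest : List ℤ) :
    depthVecAux cur [] (s :: rest) = depthVecAux cur [] rest := by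
  rw [depthVecAux.eq_def]
  simp only [if_neg hs]

theorem range_map_succ_shift (c n : ℕ) :
    (List.range (n + 1)).map (fun i => c + i + 1)
      = (c + 1) :: (List.range n).map (fun i => (c + 1) + i + 1) := by
  rw [List.range_succ_eq_map, List.map_cons, List.map_map]
  have h2 : ((fun i => c + i + 1) ∘ Nat.succ) = (fun i => (c + 1) + i + 1) := by
    funext i; simp only [Function.comp_apply]; omega
  rw [h2]

mutual
theorem dva_tree : (t : PTree) → ∀ (c v : ℕ) (s : List ℕ) (rest : List ℤ),
    depthVecAux c (v :: s) (lambdaT t ++ rest) = dvT t c ++ depthVecAux v s rest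
  | .node [] => by
    intro c v s rest
    show depthVecAux c (v :: s) ((((List.length ([] : List PTree) : ℤ) - 1) :: lambdaL []) ++ rest) = _
    rw [lambdaL, List.cons_append, List.nil_append,
      depthVecAux_down_cons _ _ _ _ (by norm_num), dvT, List.nil_append]
  | .node (t :: ts) => by
    intro c v s rest
    show depthVecAux c (v :: s) ((((↑(ts.length + 1) : ℤ) - 1) :: lambdaL (t :: ts)) ++ rest) = _
    have h1 : ((↑(ts.length + 1) : ℤ) - 1) = (ts.length : ℤ) := by push_cast; ring
    rw [List.cons_append, h1, depthVecAux_up _ _ _ (Int.ofNat_nonneg ts.length),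
      show (ts.length : ℤ).toNat = ts.length from rfl,
      dva_forest t ts c v s rest, dvT, List.cons_append]
  termination_by t => sizeOf t
theorem dva_forest : (t : PTree) → (l : List PTree) → ∀ (c v : ℕ) (s : List ℕ) (rest : List ℤ),
    depthVecAux c ((List.range l.length).map (fun i => c + i + 1) ++ v :: s)
      (lambdaL (t :: l) ++ rest) = dvF (t :: l) c ++ depthVecAux v s rest
  | t, [] => by
    intro c v s rest
    rw [lambdaL, lambdaL]
    simp only [List.length_nil, List.range_zero, List.map_nil, List.nil_append,
      List.append_nil]
    rw [dva_tree t c v s rest, dvF, dvF, List.append_nil]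
  | t, t' :: ts' => by
    intro c v s rest
    rw [lambdaL, List.length_cons, range_map_succ_shift, List.cons_append, List.append_assoc,
      dva_tree t c (c + 1) _ _, dva_forest t' ts' (c + 1) v s rest]
    simp [dvF, List.append_assoc]
  termination_by t l => 1 + sizeOf t + sizeOf l
end

mutual
theorem dva_tree0 : (t : PTree) → ∀ c : ℕ, depthVecAux c [] (lambdaT t) = dvT t c
  | .node [] => by
    intro c
    show depthVecAux c [] ((((List.length ([] : List PTree) : ℤ) - 1) :: lambdaL [])) = _
    rw [lambdaL, depthVecAux_down_nil _ _ (by norm_num), depthVecAux, dvT]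
  | .node (t :: ts) => by
    intro c
    show depthVecAux c [] ((((↑(ts.length + 1) : ℤ) - 1) :: lambdaL (t :: ts))) = _
    have h1 : ((↑(ts.length + 1) : ℤ) - 1) = (ts.length : ℤ) := by push_cast; ring
    rw [h1, depthVecAux_up _ _ _ (Int.ofNat_nonneg ts.length),
      show (ts.length : ℤ).toNat = ts.length from rfl,
      List.append_nil, dva_forest0 t ts c, dvT]
  termination_by t => sizeOf t
theorem dva_forest0 : (t : PTree) → (l : List PTree) → ∀ c : ℕ,
    depthVecAux c ((List.range l.length).map (fun i => c + i + 1)) (lambdaL (t :: l))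
      = dvF (t :: l) c
  | t, [] => by
    intro c
    rw [lambdaL, lambdaL]
    simp only [List.length_nil, List.range_zero, List.map_nil, List.append_nil]
    rw [dva_tree0 t c, dvF, dvF, List.append_nil]
  | t, t' :: ts' => by
    intro c
    rw [lambdaL, List.length_cons, range_map_succ_shift,
      dva_tree t c (c + 1) _ _, dva_forest0 t' ts' (c + 1)]
    simp [dvF, List.append_assoc]
  termination_by t l => 1 + sizeOf t + sizeOf l
end

theorem depth_lambdaT (t : PTree) : depth (lambdaT t) = lthornT t := by
  rw [depth, depthVec, dva_tree0 t 0, sum_dvT t 0]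
  ring

theorem internCountL_append (a b : List PTree) :
    internCountL (a ++ b) = internCountL a + internCountL b := by
  induction a with
  | nil => simp [internCountL]
  | cons t ts ih => rw [List.cons_append, internCountL, internCountL, ih]; ring

theorem internCountL_reverse (l : List PTree) : internCountL l.reverse = internCountL l := by
  induction l with
  | nil => rfl
  | cons t ts ih =>
    rw [List.reverse_cons, internCountL_append, internCountL, ih, internCountL, internCountL]
    ring

mutual
theorem internCount_mir : (t : PTree) → internCount (mir t) = internCount t
  | .node [] => rfl
  | .node (t :: ts) => by
    rw [mir, mirL]
    have h1 : (mirL ts).reverse.length = ts.length := by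
      rw [List.length_reverse, mirL_eq_map, List.length_map]
    rcases hrev : (mir t :: mirL ts).reverse with _ | ⟨a, l⟩
    · exfalso; simpa using congrArg List.length hrev
    · rw [internCount, internCount, ← hrev, internCountL_reverse, internCountL, internCountL,
        internCount_mir t, internCountL_mirL ts]
theorem internCountL_mirL : (l : List PTree) → internCountL (mirL l) = internCountL l
  | [] => rfl
  | t :: ts => by rw [mirL, internCountL, internCountL, internCount_mir t, internCountL_mirL ts]
end

theorem rthornL_concat (l : List PTree) (x : PTree) :
    rthornL (l ++ [x]) = rthornL l + internCountL l + rthornT x := by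
  induction l with
  | nil => simp [rthornL, internCountL]
  | cons t ts ih =>
    rw [List.cons_append, rthornL, rthornL, ih, internCountL, List.length_append]
    simp only [List.length_cons, List.length_nil]
    ring

mutual
theorem rthorn_mir : (t : PTree) → rthornT (mir t) = lthornT t
  | .node ts => by
    rw [mir, rthornT, lthornT, rthornL_mirL_rev ts]
theorem rthornL_mirL_rev : (l : List PTree) → rthornL ((mirL l).reverse) = lthornL 0 l
  | [] => rfl
  | t :: ts => by
    rw [mirL, List.reverse_cons, rthornL_concat, rthornL_mirL_rev ts, internCountL_reverse,
      internCountL_mirL ts, rthorn_mir t, lthornL, show (1 : ℕ) = 0 + 1 from rfl,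
      lthornL_shift]
    ring
end

theorem lthorn_mir (t : PTree) : lthornT (mir t) = rthornT t := by
  have := rthorn_mir (mir t)
  rw [mir_mir t] at this
  omega

theorem upDegs_append (a b : List ℤ) : upDegs (a ++ b) = upDegs a ++ upDegs b := by
  rw [upDegs, upDegs, upDegs, List.filter_append, List.map_append]

theorem upDegs_cons (s : ℤ) (P : List ℤ) :
    upDegs (s :: P) = (if 0 ≤ s then [s.toNat] else []) ++ upDegs P := by
  rw [upDegs, upDegs, List.filter_cons]
  split
  · rename_i h
    rw [if_pos (by exact_mod_cast of_decide_eq_true (by simpa using h))]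
    simp
  · rename_i h
    rw [if_neg (by intro hc; exact h (by simpa using decide_eq_true hc))]
    simp

theorem updm_forest (l : List PTree) :
    ((upDegs (lambdaL l) : List ℕ) : Multiset ℕ)
      = (l.map (fun t => ((upDegs (lambdaT t) : List ℕ) : Multiset ℕ))).sum := by
  induction l with
  | nil => rfl
  | cons t ts ih =>
    rw [lambdaL, upDegs_append, List.map_cons, List.sum_cons, ← ih]
    rfl

mutual
theorem prof_mir : (t : PTree) →
    ((upDegs (lambdaT (mir t)) : List ℕ) : Multiset ℕ)
      = ((upDegs (lambdaT t) : List ℕ) : Multiset ℕ)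
  | .node ts => by
    have h2 : ((upDegs (lambdaL ((mirL ts).reverse)) : List ℕ) : Multiset ℕ)
        = ((upDegs (lambdaL ts) : List ℕ) : Multiset ℕ) := by
      rw [updm_forest, updm_forest, mirL_eq_map, List.map_reverse, List.sum_reverse,
        List.map_map,
        show ((fun t => ((upDegs (lambdaT t) : List ℕ) : Multiset ℕ)) ∘ mir)
          = (fun t => ((upDegs (lambdaT (mir t)) : List ℕ) : Multiset ℕ)) from rfl,
        profAll_mir ts]
    rw [mir, lambdaT, lambdaT, upDegs_cons, upDegs_cons, List.length_reverse, mirL_eq_map,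
      List.length_map, ← mirL_eq_map, Multiset.coe_eq_coe]
    exact List.Perm.append_left _ (Multiset.coe_eq_coe.mp h2)
theorem profAll_mir : (l : List PTree) →
    l.map (fun t => ((upDegs (lambdaT (mir t)) : List ℕ) : Multiset ℕ))
      = l.map (fun t => ((upDegs (lambdaT t) : List ℕ) : Multiset ℕ))
  | [] => rfl
  | t :: ts => by rw [List.map_cons, List.map_cons, prof_mir t, profAll_mir ts]
end

theorem profileM_mir (t : PTree) : profileM (lambdaT (mir t)) = profileM (lambdaT t) :=
  prof_mir t

theorem tauStack_cons (s : ℤ) (P : List ℤ) :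
    tauStack (s :: P) = if s < 0 then PTree.node [] :: tauStack P
      else PTree.node ((tauStack P).take (s.toNat + 1)) :: (tauStack P).drop (s.toNat + 1) :=
  rfl

theorem lamL_tauStack : ∀ P : List ℤ, (∀ s ∈ P, -1 ≤ s) →
    (∀ i, i < P.length → (P.drop i).sum ≤ -1) →
    ((tauStack P).length : ℤ) = -P.sum ∧ lambdaL (tauStack P) = P := by
  intro P
  induction P with
  | nil => intro _ _; exact ⟨by simp [tauStack], by simp [tauStack, lambdaL]⟩
  | cons s rest ih =>
    intro hsteps hdrop
    have hrest := ih (fun x hx => hsteps x (List.mem_cons_of_mem _ hx))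
      (fun i hi => by
        have := hdrop (i + 1) (by simpa using Nat.succ_lt_succ hi)
        simpa using this)
    obtain ⟨hlen, hlam⟩ := hrest
    have hsum : (s :: rest).sum ≤ -1 := by simpa using hdrop 0 (by simp)
    rw [List.sum_cons] at hsum
    rw [tauStack_cons]
    by_cases hneg : s < 0
    · have hs1 : s = -1 := by have := hsteps s (by simp); omega
      rw [if_pos hneg]
      constructor
      · simp only [List.length_cons, List.sum_cons, hs1]
        push_cast
        omega
      · rw [lambdaL, hlam, lambdaT, lambdaL, hs1]
        norm_num
    · rw [if_neg hneg]
      have hs0 : 0 ≤ s := by omega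
      have hsl : s.toNat + 1 ≤ (tauStack rest).length := by
        have h1 : ((s.toNat : ℤ)) = s := Int.toNat_of_nonneg hs0
        omega
      constructor
      · simp only [List.length_cons, List.length_drop, List.sum_cons]
        have h1 : ((s.toNat : ℤ)) = s := Int.toNat_of_nonneg hs0
        push_cast
        omega
      · have hlt : ((tauStack rest).take (s.toNat + 1)).length = s.toNat + 1 := by
          rw [List.length_take]
          omega
        rw [lambdaL, lambdaT, hlt, List.cons_append, ← lambdaL_append,
          List.take_append_drop, hlam]
        congr 1
        have h1 : ((s.toNat : ℤ)) = s := Int.toNat_of_nonneg hs0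
        push_cast
        omega

theorem tauStack_eq_singleton {P : List ℤ} (h : IsLukas P) :
    tauStack P = [tau P] ∧ lambdaT (tau P) = P := by
  obtain ⟨hne, hsteps, hpre, hsum⟩ := h
  have hdrop : ∀ i, i < P.length → (P.drop i).sum ≤ -1 := by
    intro i hi
    have h1 : (P.take i).sum + (P.drop i).sum = P.sum := by
      rw [← List.sum_append, List.take_append_drop]
    have := hpre i hi
    omega
  obtain ⟨hlen, hlam⟩ := lamL_tauStack P hsteps hdrop
  rw [hsum] at hlen
  norm_num at hlen
  obtain ⟨t, ht⟩ := List.length_eq_one_iff.mp hlen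
  have htau : tau P = t := by rw [tau, ht]; rfl
  refine ⟨by rw [ht, htau], ?_⟩
  rw [htau]
  rw [ht, lambdaL, lambdaL, List.append_nil] at hlam
  exact hlam

mutual
theorem tauStack_lambdaT : (t : PTree) → ∀ Q : List ℤ, tauStack (lambdaT t ++ Q) = t :: tauStack Q
  | .node [] => by
    intro Q
    show tauStack ((((List.length ([] : List PTree) : ℤ) - 1) :: lambdaL []) ++ Q) = _
    rw [lambdaL, List.cons_append, List.nil_append, tauStack_cons, if_pos (by norm_num)]
  | .node (t :: ts) => by
    intro Q
    show tauStack ((((↑(ts.length + 1) : ℤ) - 1) :: lambdaL (t :: ts)) ++ Q) = _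
    have h1 : ((↑(ts.length + 1) : ℤ) - 1) = (ts.length : ℤ) := by push_cast; ring
    rw [List.cons_append, h1, tauStack_cons, if_neg (by exact not_lt.mpr (Int.ofNat_nonneg _)),
      tauStack_lambdaL (t :: ts) Q,
      show (ts.length : ℤ).toNat + 1 = (t :: ts).length from by simp]
    rw [List.take_left' rfl, List.drop_left' rfl]
theorem tauStack_lambdaL : (l : List PTree) → ∀ Q : List ℤ,
    tauStack (lambdaL l ++ Q) = l ++ tauStack Q
  | [] => by intro Q; rw [lambdaL, List.nil_append, List.nil_append]
  | t :: ts => by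
    intro Q
    rw [lambdaL, List.append_assoc, tauStack_lambdaT t _, tauStack_lambdaL ts Q,
      List.cons_append]
end

theorem tau_lambdaT (t : PTree) : tau (lambdaT t) = t := by
  have := tauStack_lambdaT t []
  rw [List.append_nil] at this
  rw [tau, this]
  rfl

/-- The involution `σ = λ ∘ mir ∘ τ`. -/
def sigma (P : List ℤ) : List ℤ := lambdaT (mir (tau P))

theorem sigma_memL {M : Multiset ℕ} {P : List ℤ} (h : MemL M P) : MemL M (sigma P) := by
  obtain ⟨hl, hprof⟩ := h
  refine ⟨isLukas_lambdaT _, ?_⟩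
  rw [sigma, profileM_mir, (tauStack_eq_singleton hl).2, hprof]

theorem sigma_sigma {P : List ℤ} (h : IsLukas P) : sigma (sigma P) = P := by
  rw [sigma, sigma, tau_lambdaT, mir_mir, (tauStack_eq_singleton h).2]

theorem area_sigma {P : List ℤ} (h : IsLukas P) : area (sigma P) = depth P := by
  rw [sigma, area_lambdaT, rthorn_mir, ← depth_lambdaT, (tauStack_eq_singleton h).2]

theorem depth_sigma {P : List ℤ} (h : IsLukas P) : depth (sigma P) = area P := by
  rw [sigma, depth_lambdaT, lthorn_mir, ← area_lambdaT, (tauStack_eq_singleton h).2]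
end Luka

open Luka in
/-- For any finite multiset `M` of naturals, the polynomial
`C̃_M(q,t) = Σ_{P ∈ 𝓛_M} q^{area(P)} t^{depth(P)}` is symmetric in `q, t`:
the statistics `area` and `depth` are jointly symmetrically distributed over
Łukasiewicz paths with profile multiset `M`.  The finite set `𝓛_M` is presented as an
arbitrary `Finset S` whose members are exactly the Łukasiewicz paths with profile
multiset `M`. -/
theorem tildeC_M_qt_symm (M : Multiset ℕ) {R : Type*} [CommSemiring R]
    (q t : R) (S : Finset (List ℤ)) (hS : ∀ P, P ∈ S ↔ MemL M P) :
    ∑ P ∈ S, q ^ area P * t ^ depth P = ∑ P ∈ S, t ^ area P * q ^ depth P := by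
  have key : ∀ P ∈ S, sigma P ∈ S := fun P hP => (hS _).mpr (sigma_memL ((hS P).mp hP))
  refine Finset.sum_nbij' (i := sigma) (j := sigma) key key
    (fun P hP => sigma_sigma ((hS P).mp hP).1)
    (fun P hP => sigma_sigma ((hS P).mp hP).1)
    (fun P hP => ?_)
  rw [area_sigma ((hS P).mp hP).1, depth_sigma ((hS P).mp hP).1, mul_comm]
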